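/- Let f : ℝ² → ℝ be of class C⁵ near the origin with f_{20} = f_{02} = f_{30} = f_{03} = 0 at the origin. Define â : ℝ³ → ℝ by â(x, y, q) = f_{20}(x, y) q² + 2 f_{11}(x, y) q + f_{02}(x, y), and Î : ℝ³ → ℝ by Î(x, y, q) = (∂â/∂y)(x, y, q) + q (∂â/∂x)(x, y, q), and let Ĝ = (â, Î) : ℝ³ → ℝ². Then every vector (ξ, η, κ) in the kernel of the Fréchet derivative of Ĝ at (0, 0, 0) satisfies 2 f_{11} f_{04} η − (3 f_{12}² − 2 f_{11} f_{13}) ξ = 0, where f_{ij} denotes the value at the origin. (This is the equation of the tangent line L_{F_ℓ} to the left flecnodal curve at the hyperbonode.) -/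

import Mathlib

/-!
At `q = 0` the differential of `â = f₂₀ q² + 2 f₁₁ q + f₀₂` is `f₁₂ ξ + f₀₃ η + 2 f₁₁ κ`.
Since `Î = â_y + q â_x = (∂_y f₂₀ q² + 2 ∂_y f₁₁ q + f₀₃) + q (f₃₀ q² + 2 f₂₁ q + f₁₂)`, the
product with `q` contributes only `f₁₂ κ` at `q = 0`, and the differential of `Î` is
`f₁₃ ξ + f₀₄ η + 3 f₁₂ κ`, where `∂_y f₁₁ = f₁₂` by Schwarz. With `f₀₃ = 0`, eliminating `κ`
from the two kernel equations gives the tangent line.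
-/

/-- Partial derivative in the `x` direction. -/
noncomputable def pdx (f : ℝ × ℝ → ℝ) : ℝ × ℝ → ℝ := fun q => fderiv ℝ f q (1, 0)

/-- Partial derivative in the `y` direction. -/
noncomputable def pdy (f : ℝ × ℝ → ℝ) : ℝ × ℝ → ℝ := fun q => fderiv ℝ f q (0, 1)

/-- `pd i j f = ∂^{i+j} f / ∂x^i ∂y^j`. -/
noncomputable def pd (i j : ℕ) (f : ℝ × ℝ → ℝ) : ℝ × ℝ → ℝ := pdx^[i] (pdy^[j] f)

open Topology ContinuousLinearMap

section PartialDerivatives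

variable {g : ℝ × ℝ → ℝ} {z : ℝ × ℝ} {m n : WithTop ℕ∞}

theorem ContDiffAt.pdx (hg : ContDiffAt ℝ n g z) (hmn : m + 1 ≤ n) :
    ContDiffAt ℝ m (pdx g) z :=
  (hg.fderiv_right hmn).clm_apply contDiffAt_const

theorem ContDiffAt.pdy (hg : ContDiffAt ℝ n g z) (hmn : m + 1 ≤ n) :
    ContDiffAt ℝ m (pdy g) z :=
  (hg.fderiv_right hmn).clm_apply contDiffAt_const

theorem ContDiffAt.pd (hg : ContDiffAt ℝ n g z) (i j : ℕ) (hmn : m + (i + j : ℕ) ≤ n) :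
    ContDiffAt ℝ m (pd i j g) z := by
  induction i generalizing m with
  | zero =>
    induction j generalizing m with
    | zero => simpa [pd] using hg.of_le (by simpa using hmn)
    | succ j ih =>
      rw [pd, Function.iterate_zero_apply, Function.iterate_succ_apply']
      refine (ih (m := m + 1) ?_).pdy le_rfl
      simpa [add_assoc, add_comm (1 : WithTop ℕ∞)] using hmn
  | succ i ih =>
    rw [pd, Function.iterate_succ_apply']
    refine (ih (m := m + 1) ?_).pdx le_rfl
    push_cast at hmn ⊢
    convert hmn using 1; ring

theorem fderiv_apply_eq_pdx_add_pdy (u v : ℝ) :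
    fderiv ℝ g z (u, v) = u * pdx g z + v * pdy g z := by
  have : ((u, v) : ℝ × ℝ) = u • (1, 0) + v • (0, 1) := by simp
  rw [this, map_add, map_smul, map_smul, smul_eq_mul, smul_eq_mul, pdx, pdy]

theorem pdy_pdx_eq_pdx_pdy (hg : ContDiffAt ℝ 2 g z) : pdy (pdx g) z = pdx (pdy g) z := by
  have hd : DifferentiableAt ℝ (fderiv ℝ g) z :=
    (hg.fderiv_right (m := 1) (by norm_num)).differentiableAt (by norm_num)
  have hdir (w : ℝ × ℝ) : HasFDerivAt (fun u => fderiv ℝ g u w)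
      ((ContinuousLinearMap.apply ℝ ℝ w).comp (fderiv ℝ (fderiv ℝ g) z)) z :=
    (ContinuousLinearMap.apply ℝ ℝ w).hasFDerivAt.comp z hd.hasFDerivAt
  change fderiv ℝ (fun u => fderiv ℝ g u (1, 0)) z (0, 1)
    = fderiv ℝ (fun u => fderiv ℝ g u (0, 1)) z (1, 0)
  rw [(hdir _).fderiv, (hdir _).fderiv]
  exact hg.isSymmSndFDerivAt (by simp) _ _

end PartialDerivatives

section SlopeQuadratic

noncomputable def basePoint : ℝ × ℝ × ℝ →L[ℝ] ℝ × ℝ :=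
  (fst ℝ ℝ (ℝ × ℝ)).prod ((fst ℝ ℝ ℝ).comp (snd ℝ ℝ (ℝ × ℝ)))

noncomputable def slopeCoord : ℝ × ℝ × ℝ →L[ℝ] ℝ := (snd ℝ ℝ ℝ).comp (snd ℝ ℝ (ℝ × ℝ))

def slopeQuadratic (a b c : ℝ × ℝ → ℝ) (p : ℝ × ℝ × ℝ) : ℝ :=
  a (p.1, p.2.1) * p.2.2 ^ 2 + 2 * b (p.1, p.2.1) * p.2.2 + c (p.1, p.2.1)

noncomputable def slopeDerivative (F : ℝ × ℝ × ℝ → ℝ) (p : ℝ × ℝ × ℝ) : ℝ :=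
  fderiv ℝ F p (0, 1, 0) + p.2.2 * fderiv ℝ F p (1, 0, 0)

@[simp] theorem basePoint_apply (p : ℝ × ℝ × ℝ) : basePoint p = (p.1, p.2.1) := rfl

@[simp] theorem slopeCoord_apply (p : ℝ × ℝ × ℝ) : slopeCoord p = p.2.2 := rfl

variable {a b c : ℝ × ℝ → ℝ} {x y q : ℝ}

theorem hasFDerivAt_slopeQuadratic (ha : DifferentiableAt ℝ a (x, y))
    (hb : DifferentiableAt ℝ b (x, y)) (hc : DifferentiableAt ℝ c (x, y)) :
    HasFDerivAt (slopeQuadratic a b c)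
      (q ^ 2 • (fderiv ℝ a (x, y)).comp basePoint + (2 * q) • (fderiv ℝ b (x, y)).comp basePoint
        + (fderiv ℝ c (x, y)).comp basePoint + (2 * (a (x, y) * q + b (x, y))) • slopeCoord)
      (x, y, q) := by
  have hA := ha.hasFDerivAt.comp (x, y, q) basePoint.hasFDerivAt
  have hB := hb.hasFDerivAt.comp (x, y, q) basePoint.hasFDerivAt
  have hC := hc.hasFDerivAt.comp (x, y, q) basePoint.hasFDerivAt
  have hQ := slopeCoord.hasFDerivAt (x := (x, y, q))
  have H := ((hA.mul (hQ.pow 2)).add ((hB.const_mul 2).mul hQ)).add hC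
  refine (H.congr_fderiv ?_).congr_of_eventuallyEq (.of_forall fun p => ?_)
  · refine ContinuousLinearMap.ext fun p => ?_
    simp only [add_apply, smul_apply, comp_apply, Function.comp_apply, basePoint_apply,
      slopeCoord_apply, smul_eq_mul]
    ring
  · simp [slopeQuadratic]

theorem hasFDerivAt_slopeQuadratic_zero (ha : DifferentiableAt ℝ a (x, y))
    (hb : DifferentiableAt ℝ b (x, y)) (hc : DifferentiableAt ℝ c (x, y)) :
    HasFDerivAt (slopeQuadratic a b c)
      ((fderiv ℝ c (x, y)).comp basePoint + (2 * b (x, y)) • slopeCoord) (x, y, 0) := by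
  simpa using hasFDerivAt_slopeQuadratic (q := 0) ha hb hc

theorem slopeDerivative_slopeQuadratic (ha : DifferentiableAt ℝ a (x, y))
    (hb : DifferentiableAt ℝ b (x, y)) (hc : DifferentiableAt ℝ c (x, y)) :
    slopeDerivative (slopeQuadratic a b c) (x, y, q)
      = slopeQuadratic (pdy a) (pdy b) (pdy c) (x, y, q)
        + q * slopeQuadratic (pdx a) (pdx b) (pdx c) (x, y, q) := by
  simp only [slopeDerivative, (hasFDerivAt_slopeQuadratic ha hb hc).fderiv, add_apply, smul_apply,
    comp_apply, basePoint_apply, slopeCoord_apply, smul_eq_mul, slopeQuadratic, pdx, pdy]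
  ring

theorem hasFDerivAt_slopeDerivative_slopeQuadratic (ha : ContDiffAt ℝ 2 a (x, y))
    (hb : ContDiffAt ℝ 2 b (x, y)) (hc : ContDiffAt ℝ 2 c (x, y)) :
    HasFDerivAt (slopeDerivative (slopeQuadratic a b c))
      ((fderiv ℝ (pdy c) (x, y)).comp basePoint + (2 * pdy b (x, y) + pdx c (x, y)) • slopeCoord)
      (x, y, 0) := by
  have hdiff {g : ℝ × ℝ → ℝ} (hg : ContDiffAt ℝ 2 g (x, y)) :
      ∀ᶠ p in 𝓝 (x, y, (0 : ℝ)), DifferentiableAt ℝ g (p.1, p.2.1) :=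
    basePoint.continuous.continuousAt.eventually
      ((hg.eventually (by simp)).mono fun _ h => h.differentiableAt two_ne_zero)
  have hd1 {g : ℝ × ℝ → ℝ} (hg : ContDiffAt ℝ 2 g (x, y)) : DifferentiableAt ℝ (pdx g) (x, y) :=
    (hg.pdx (m := 1) (by norm_num)).differentiableAt one_ne_zero
  have hd2 {g : ℝ × ℝ → ℝ} (hg : ContDiffAt ℝ 2 g (x, y)) : DifferentiableAt ℝ (pdy g) (x, y) :=
    (hg.pdy (m := 1) (by norm_num)).differentiableAt one_ne_zero
  -- `slopeDerivative` is defined through `fderiv`, so its closed form is only available on the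
  -- neighbourhood where `a`, `b`, `c` are differentiable.
  have hEq : slopeDerivative (slopeQuadratic a b c) =ᶠ[𝓝 (x, y, 0)]
      fun p => slopeQuadratic (pdy a) (pdy b) (pdy c) p
        + slopeCoord p * slopeQuadratic (pdx a) (pdx b) (pdx c) p := by
    filter_upwards [hdiff ha, hdiff hb, hdiff hc] with p ha hb hc
    exact slopeDerivative_slopeQuadratic ha hb hc
  have H := (hasFDerivAt_slopeQuadratic_zero (hd2 ha) (hd2 hb) (hd2 hc)).add
    (slopeCoord.hasFDerivAt.mul (hasFDerivAt_slopeQuadratic_zero (hd1 ha) (hd1 hb) (hd1 hc)))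
  refine (H.congr_of_eventuallyEq hEq).congr_fderiv ?_
  refine ContinuousLinearMap.ext fun p => ?_
  simp only [add_apply, smul_apply, comp_apply, basePoint_apply, slopeCoord_apply, smul_eq_mul,
    slopeQuadratic]
  ring

end SlopeQuadratic

theorem tangent_line_left_flecnodal_general (f : ℝ × ℝ → ℝ) (hf : ContDiffAt ℝ 5 f 0)
    (h03 : pd 0 3 f 0 = 0)
    (ahat : ℝ × ℝ × ℝ → ℝ)
    (hahat : ∀ x y q : ℝ,
      ahat (x, y, q) = pd 2 0 f (x, y) * q ^ 2 + 2 * pd 1 1 f (x, y) * q + pd 0 2 f (x, y))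
    (Ihat : ℝ × ℝ × ℝ → ℝ)
    (hIhat : ∀ x y q : ℝ,
      Ihat (x, y, q) = fderiv ℝ ahat (x, y, q) (0, 1, 0) + q * fderiv ℝ ahat (x, y, q) (1, 0, 0))
    (Ghat : ℝ × ℝ × ℝ → ℝ × ℝ) (hGhat : ∀ w, Ghat w = (ahat w, Ihat w))
    (ξ η κ : ℝ) (hker : fderiv ℝ Ghat (0, 0, 0) (ξ, η, κ) = 0) :
    2 * pd 1 1 f 0 * pd 0 4 f 0 * η
      - (3 * (pd 1 2 f 0) ^ 2 - 2 * pd 1 1 f 0 * pd 1 3 f 0) * ξ = 0 := by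
  have hreg (i j : ℕ) (hij : i + j = 2) : ContDiffAt ℝ 2 (pd i j f) 0 :=
    hf.pd i j (by rw [hij]; norm_num)
  have hA : ahat = slopeQuadratic (pd 2 0 f) (pd 1 1 f) (pd 0 2 f) :=
    funext fun p => hahat p.1 p.2.1 p.2.2
  have hI : Ihat = slopeDerivative ahat := funext fun p => hIhat p.1 p.2.1 p.2.2
  have hDa := hasFDerivAt_slopeQuadratic_zero ((hreg 2 0 rfl).differentiableAt two_ne_zero)
    ((hreg 1 1 rfl).differentiableAt two_ne_zero) ((hreg 0 2 rfl).differentiableAt two_ne_zero)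
  have hDI := hasFDerivAt_slopeDerivative_slopeQuadratic (hreg 2 0 rfl) (hreg 1 1 rfl) (hreg 0 2 rfl)
  rw [← hA] at hDa hDI
  rw [← hI] at hDI
  rw [show Ghat = fun w => (ahat w, Ihat w) from funext hGhat, (hDa.prodMk hDI).fderiv, prod_apply,
    Prod.mk_eq_zero] at hker
  obtain ⟨e1, e2⟩ := hker
  simp only [add_apply, comp_apply, smul_apply, basePoint_apply, slopeCoord_apply, smul_eq_mul,
    fderiv_apply_eq_pdx_add_pdy] at e1 e2
  change ξ * pd 1 2 f 0 + η * pd 0 3 f 0 + 2 * pd 1 1 f 0 * κ = 0 at e1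
  change ξ * pd 1 3 f 0 + η * pd 0 4 f 0 + (2 * pdy (pd 1 1 f) 0 + pd 1 2 f 0) * κ = 0 at e2
  have hsym : pdy (pd 1 1 f) 0 = pd 1 2 f 0 := pdy_pdx_eq_pdx_pdy (hf.pdy (by norm_num))
  rw [hsym] at e2
  linear_combination 2 * pd 1 1 f 0 * e2 - 3 * pd 1 2 f 0 * e1 + 3 * pd 1 2 f 0 * η * h03

/-- At a hyperbonode with the asymptotic lines as coordinate axes, every vector in the
kernel of the derivative at the origin of `Ĝ = (â, Î)` satisfies the equation of the
tangent line `L_{F_ℓ}` to the left flecnodal curve: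
`2 f₁₁ f₀₄ η − (3 f₁₂² − 2 f₁₁ f₁₃) ξ = 0`. -/
theorem tangent_line_left_flecnodal (f : ℝ × ℝ → ℝ) (hf : ContDiffAt ℝ 5 f 0)
    (h20 : pd 2 0 f 0 = 0) (h02 : pd 0 2 f 0 = 0)
    (h30 : pd 3 0 f 0 = 0) (h03 : pd 0 3 f 0 = 0)
    (ahat : ℝ × ℝ × ℝ → ℝ)
    (hahat : ∀ x y q : ℝ,
      ahat (x, y, q) = pd 2 0 f (x, y) * q ^ 2 + 2 * pd 1 1 f (x, y) * q + pd 0 2 f (x, y))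
    (Ihat : ℝ × ℝ × ℝ → ℝ)
    (hIhat : ∀ x y q : ℝ,
      Ihat (x, y, q) = fderiv ℝ ahat (x, y, q) (0, 1, 0) + q * fderiv ℝ ahat (x, y, q) (1, 0, 0))
    (Ghat : ℝ × ℝ × ℝ → ℝ × ℝ) (hGhat : ∀ w, Ghat w = (ahat w, Ihat w))
    (ξ η κ : ℝ) (hker : fderiv ℝ Ghat (0, 0, 0) (ξ, η, κ) = 0) :
    2 * pd 1 1 f 0 * pd 0 4 f 0 * η
      - (3 * (pd 1 2 f 0) ^ 2 - 2 * pd 1 1 f 0 * pd 1 3 f 0) * ξ = 0 :=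
  tangent_line_left_flecnodal_general f hf h03 ahat hahat Ihat hIhat Ghat hGhat ξ η κ hker
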